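/- Let K ≥ 1 and k ≥ 3, let π : G̃ → G be a surjective group homomorphism, and let Ã be a K-approximate group in G̃. Then there exist constants c, C > 0 depending only on K and k such that (ker(π) ∩ Ã^k)³ is a C-approximate group whose cardinality lies between c·|Ã|/|π(Ã)| and C·|Ã|/|π(Ã)|. -/

import Mathlib

/-!
Let `B = ker π ∩ Ã^k`. Lifting each point of `π(Ã)` to one preimage in `Ã` gives
`|π(Ã)| · |ker π ∩ Ã^m| ≤ |Ã^(m+1)| ≤ K^m |Ã|` and `|Ã| ≤ |π(Ã)| · |ker π ∩ Ã²|`, so all the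
slices `ker π ∩ Ã^m` have size comparable to `|Ã|/|π(Ã)|`, which gives the cardinality bounds for
`B³`. In particular `B⁶ · (ker π ∩ Ã²) ⊆ ker π ∩ Ã^(6k+2)` is at most `K^(6k+2)` times larger than
`ker π ∩ Ã²`, so Ruzsa's covering lemma covers `B⁶` by `K^(6k+2)` left translates of `B²` with
centres in `B⁶`. After symmetrising the centres, a cover `B⁶ ⊆ X·B²` with `X = X⁻¹ ⊆ B⁶` is all
it takes to make `B³` an approximate group with `X` as its set of translates.
-/

open Pointwise

/-- A `K`-approximate group: a finite symmetric set containing the identity, with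
`A·A ⊆ X·A ⊆ A·X·X` and `A·A ⊆ A·X ⊆ X·X·A` for some set `X` of size at most `K`. -/
def IsApproxGroup {G : Type*} [Group G] (K : ℝ) (A : Set G) : Prop :=
  A.Finite ∧ (1 : G) ∈ A ∧ A⁻¹ = A ∧
    ∃ X : Set G, X.Finite ∧ (X.ncard : ℝ) ≤ K ∧
      A * A ⊆ X * A ∧ X * A ⊆ A * X * X ∧ A * A ⊆ A * X ∧ A * X ⊆ X * X * A

namespace IsApproxGroup
variable {G : Type*} [Group G] {K L : ℝ} {A : Set G}

theorem mono (hKL : K ≤ L) (hA : IsApproxGroup K A) : IsApproxGroup L A := by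
  obtain ⟨hfin, h1, hinv, X, hX, hXK, hcov⟩ := hA
  exact ⟨hfin, h1, hinv, X, hX, hXK.trans hKL, hcov⟩

theorem isApproximateSubgroup (hA : IsApproxGroup K A) : IsApproximateSubgroup K A := by
  obtain ⟨-, h1, hinv, X, hX, hXK, hsq, -⟩ := hA
  refine ⟨h1, hinv, hX.toFinset, by rwa [← Set.ncard_eq_toFinset_card X hX], ?_⟩
  simpa [sq] using hsq

theorem ncard_pow_succ_le (hA : IsApproxGroup K A) (m : ℕ) :
    ((A ^ (m + 1)).ncard : ℝ) ≤ K ^ m * A.ncard := by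
  classical
  have hAs := hA.isApproximateSubgroup
  lift A to Finset G using hA.1
  simpa [← Finset.coe_pow] using hAs.card_pow_le (n := m + 1)

end IsApproxGroup

theorem Set.Finite.pow {M : Type*} [Monoid M] {s : Set M} (hs : s.Finite) (n : ℕ) :
    (s ^ n).Finite := by
  induction n with
  | zero => simp
  | succ n ih => rw [pow_succ]; exact ih.mul hs

section Covering
variable {G : Type*} [Group G] {B F X : Set G}

theorem Set.inv_pow_of_inv_eq_self (hB : B⁻¹ = B) (n : ℕ) : (B ^ n)⁻¹ = B ^ n := by
  rw [← inv_pow, hB]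

theorem isApproxGroup_pow_three_of_symmetric_cover (hB : B.Finite) (h1 : (1 : G) ∈ B)
    (hBinv : B⁻¹ = B) (hXinv : X⁻¹ = X) (hXB : X ⊆ B ^ 6) (hcov : B ^ 6 ⊆ X * B ^ 2) :
    IsApproxGroup X.ncard (B ^ 3) := by
  have hmono : ∀ {m n : ℕ}, m ≤ n → B ^ m ⊆ B ^ n := fun h => Set.pow_subset_pow_right h1 h
  have hpow_inv := Set.inv_pow_of_inv_eq_self hBinv
  have hcov' : B ^ 6 ⊆ B ^ 2 * X := by
    simpa [mul_inv_rev, hpow_inv, hXinv] using Set.inv_subset_inv.2 hcov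
  have hsq : B ^ 3 * B ^ 3 ⊆ X * B ^ 3 :=
    calc B ^ 3 * B ^ 3 = B ^ 6 := by rw [← pow_add]
      _ ⊆ X * B ^ 2 := hcov
      _ ⊆ X * B ^ 3 := Set.mul_subset_mul_left (hmono (by norm_num))
  have hswap : X * B ^ 3 ⊆ B ^ 3 * X * X :=
    calc X * B ^ 3 ⊆ B ^ 6 * B ^ 3 := Set.mul_subset_mul_right hXB
      _ = B ^ 3 * B ^ 6 := by rw [← pow_add, ← pow_add]
      _ ⊆ B ^ 3 * (B ^ 2 * X) := Set.mul_subset_mul_left hcov'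
      _ = B ^ 5 * X := by rw [← mul_assoc, ← pow_add]
      _ ⊆ B ^ 6 * X := Set.mul_subset_mul_right (hmono (by norm_num))
      _ ⊆ B ^ 2 * X * X := Set.mul_subset_mul_right hcov'
      _ ⊆ B ^ 3 * X * X :=
        Set.mul_subset_mul_right (Set.mul_subset_mul_right (hmono (by norm_num)))
  refine ⟨hB.pow 3, Set.one_mem_pow h1, hpow_inv 3, X, (hB.pow 6).subset hXB, le_rfl, hsq,
    hswap, ?_, ?_⟩
  · simpa [mul_inv_rev, hXinv, hpow_inv] using Set.inv_subset_inv.2 hsq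
  · simpa [mul_inv_rev, hXinv, hpow_inv, mul_assoc] using Set.inv_subset_inv.2 hswap

theorem isApproxGroup_pow_three_of_cover (hB : B.Finite) (h1 : (1 : G) ∈ B) (hBinv : B⁻¹ = B)
    (hFB : F ⊆ B ^ 6) (hcov : B ^ 6 ⊆ F * B ^ 2) : IsApproxGroup (2 * F.ncard) (B ^ 3) := by
  have hFinv : F⁻¹ ⊆ B ^ 6 := by
    simpa [Set.inv_pow_of_inv_eq_self hBinv] using Set.inv_subset_inv.2 hFB
  refine (isApproxGroup_pow_three_of_symmetric_cover hB h1 hBinv (X := F ∪ F⁻¹)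
    (by rw [Set.union_inv, inv_inv, Set.union_comm]) (Set.union_subset hFB hFinv)
    (hcov.trans (Set.mul_subset_mul_right Set.subset_union_left))).mono ?_
  calc ((F ∪ F⁻¹).ncard : ℝ) ≤ F.ncard + F⁻¹.ncard := by exact_mod_cast Set.ncard_union_le _ _
    _ = 2 * F.ncard := by rw [Set.ncard_inv]; ring

end Covering

theorem Subgroup.coe_inter_pow_subset {G : Type*} [Group G] (S : Subgroup G) (s : Set G) (n : ℕ) :
    ((S : Set G) ∩ s) ^ n ⊆ S ∩ s ^ n := by
  induction n with
  | zero => simp [S.one_mem]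
  | succ n ih =>
    rintro _ ⟨x, hx, y, ⟨hyS, hys⟩, rfl⟩
    rw [pow_succ]
    exact ⟨S.mul_mem (ih hx).1 hyS, Set.mul_mem_mul (ih hx).2 hys⟩

namespace MonoidHom
variable {G₁ G₂ : Type*} [Group G₁] [Group G₂] (π : G₁ →* G₂) {A H : Set G₁}

theorem ncard_image_mul_ncard_le_ncard_mul_of_subset_ker (hA : A.Finite) (hH : H ⊆ π.ker) :
    (π '' A).ncard * H.ncard ≤ (A * H).ncard := by
  obtain hHfin | hHinf := H.finite_or_infinite
  swap
  · simp [hHinf.ncard]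
  set s := Function.invFunOn π A
  rw [← Set.ncard_prod]
  refine Set.ncard_le_ncard_of_injOn (fun p => s p.1 * p.2) ?_ ?_ (hA.mul hHfin)
  · rintro ⟨y, h⟩ ⟨hy, hh⟩
    exact Set.mul_mem_mul (Function.invFunOn_mem hy) hh
  · rintro ⟨y, h⟩ ⟨hy, hh⟩ ⟨y', h'⟩ ⟨hy', hh'⟩ heq
    have hyy' : y = y' := by
      simpa [s, Function.invFunOn_eq hy, Function.invFunOn_eq hy', MonoidHom.mem_ker.1 (hH hh),
        MonoidHom.mem_ker.1 (hH hh')] using congrArg π heq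
    subst hyy'
    simpa using heq

theorem ncard_le_ncard_image_mul_ncard_ker_inter (hA : A.Finite) :
    A.ncard ≤ (π '' A).ncard * ((π.ker : Set G₁) ∩ (A⁻¹ * A)).ncard := by
  set s := Function.invFunOn π A
  rw [← Set.ncard_prod]
  refine Set.ncard_le_ncard_of_injOn (fun a => (π a, (s (π a))⁻¹ * a)) ?_ ?_
    ((hA.image π).prod ((hA.inv.mul hA).inter_of_right _))
  · intro a ha
    have hπa : π a ∈ π '' A := Set.mem_image_of_mem π ha
    refine ⟨hπa, ?_, Set.mul_mem_mul (Set.inv_mem_inv.2 (Function.invFunOn_mem hπa)) ha⟩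
    simp [s, Function.invFunOn_eq hπa]
  · intro a _ b _ heq
    simp only [Prod.mk.injEq] at heq
    rw [heq.1] at heq
    exact mul_left_cancel heq.2

end MonoidHom

namespace IsApproxGroup
variable {G₁ G₂ : Type*} [Group G₁] [Group G₂] (π : G₁ →* G₂) {K : ℝ} {A : Set G₁}

theorem ncard_image_mul_ncard_ker_inter_pow_le (hA : IsApproxGroup K A) (m : ℕ) :
    ((π '' A).ncard : ℝ) * ((π.ker : Set G₁) ∩ A ^ m).ncard ≤ K ^ m * A.ncard :=
  calc ((π '' A).ncard : ℝ) * ((π.ker : Set G₁) ∩ A ^ m).ncard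
      ≤ (A * ((π.ker : Set G₁) ∩ A ^ m)).ncard := by
        exact_mod_cast π.ncard_image_mul_ncard_le_ncard_mul_of_subset_ker hA.1 Set.inter_subset_left
    _ ≤ (A ^ (m + 1)).ncard := by
        rw [pow_succ']
        exact_mod_cast Set.ncard_le_ncard (Set.mul_subset_mul_left Set.inter_subset_right)
          (hA.1.mul (hA.1.pow m))
    _ ≤ K ^ m * A.ncard := hA.ncard_pow_succ_le m

theorem ncard_le_ncard_image_mul_ncard_ker_inter_sq (hA : IsApproxGroup K A) :
    (A.ncard : ℝ) ≤ (π '' A).ncard * ((π.ker : Set G₁) ∩ A ^ 2).ncard := by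
  have := π.ncard_le_ncard_image_mul_ncard_ker_inter hA.1
  rw [hA.isApproximateSubgroup.inv_eq_self, ← sq] at this
  exact_mod_cast this

theorem ncard_image_pos (hA : IsApproxGroup K A) : 0 < (π '' A).ncard :=
  Set.ncard_pos (hA.1.image π) |>.2 ⟨π 1, 1, hA.isApproximateSubgroup.one_mem, rfl⟩

theorem ncard_image_mul_ncard_ker_inter_pow_pow_le (hA : IsApproxGroup K A) (k j : ℕ) :
    ((π '' A).ncard : ℝ) * (((π.ker : Set G₁) ∩ A ^ k) ^ j).ncard ≤ K ^ (k * j) * A.ncard :=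
  calc ((π '' A).ncard : ℝ) * (((π.ker : Set G₁) ∩ A ^ k) ^ j).ncard
      ≤ (π '' A).ncard * ((π.ker : Set G₁) ∩ A ^ (k * j)).ncard := by
        gcongr
        · exact (hA.1.pow _).inter_of_right _
        · rw [pow_mul]; exact Subgroup.coe_inter_pow_subset π.ker (A ^ k) j
    _ ≤ K ^ (k * j) * A.ncard := hA.ncard_image_mul_ncard_ker_inter_pow_le π _

theorem ncard_le_ncard_image_mul_ncard_ker_inter_pow_pow (hA : IsApproxGroup K A) {k j : ℕ}
    (hk : 2 ≤ k) (hj : j ≠ 0) :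
    (A.ncard : ℝ) ≤ (π '' A).ncard * (((π.ker : Set G₁) ∩ A ^ k) ^ j).ncard := by
  have h1A := hA.isApproximateSubgroup.one_mem
  refine (hA.ncard_le_ncard_image_mul_ncard_ker_inter_sq π).trans ?_
  gcongr
  · exact (((hA.1.pow k).inter_of_right _).pow j)
  · refine (Set.inter_subset_inter_right _ (Set.pow_subset_pow_right h1A hk)).trans ?_
    exact Set.subset_pow ⟨π.ker.one_mem, Set.one_mem_pow h1A⟩ hj

theorem ker_inter_pow_inv (hA : IsApproxGroup K A) (m : ℕ) :
    ((π.ker : Set G₁) ∩ A ^ m)⁻¹ = (π.ker : Set G₁) ∩ A ^ m := by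
  rw [Set.inter_inv, inv_coe_set,
    Set.inv_pow_of_inv_eq_self hA.isApproximateSubgroup.inv_eq_self]

theorem exists_cover_ker_inter_pow (hA : IsApproxGroup K A) {k : ℕ} (hk : 2 ≤ k) :
    ∃ F ⊆ ((π.ker : Set G₁) ∩ A ^ k) ^ 6, (F.ncard : ℝ) ≤ K ^ (6 * k + 2) ∧
      ((π.ker : Set G₁) ∩ A ^ k) ^ 6 ⊆ F * ((π.ker : Set G₁) ∩ A ^ k) ^ 2 := by
  set B := (π.ker : Set G₁) ∩ A ^ k
  set H := (π.ker : Set G₁) ∩ A ^ 2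
  have h1A := hA.isApproximateSubgroup.one_mem
  have hHB : H ⊆ B := Set.inter_subset_inter_right _ (Set.pow_subset_pow_right h1A hk)
  have hB6 : B ^ 6 ⊆ (π.ker : Set G₁) ∩ A ^ (k * 6) := by
    rw [pow_mul]; exact Subgroup.coe_inter_pow_subset π.ker (A ^ k) 6
  have hB6H : B ^ 6 * H ⊆ (π.ker : Set G₁) ∩ A ^ (6 * k + 2) := by
    rintro _ ⟨x, hx, y, ⟨hyker, hyA⟩, rfl⟩
    refine ⟨π.ker.mul_mem (hB6 hx).1 hyker, ?_⟩
    rw [pow_add, mul_comm 6 k]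
    exact Set.mul_mem_mul (hB6 hx).2 hyA
  have hπA : (0 : ℝ) < (π '' A).ncard := mod_cast hA.ncard_image_pos π
  have hgrowth : ((B ^ 6 * H).ncard : ℝ) ≤ K ^ (6 * k + 2) * H.ncard := by
    refine le_of_mul_le_mul_left ?_ hπA
    calc ((π '' A).ncard : ℝ) * (B ^ 6 * H).ncard
        ≤ (π '' A).ncard * ((π.ker : Set G₁) ∩ A ^ (6 * k + 2)).ncard := by
          gcongr
          exact (hA.1.pow _).inter_of_right _
      _ ≤ K ^ (6 * k + 2) * A.ncard := hA.ncard_image_mul_ncard_ker_inter_pow_le π _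
      _ ≤ K ^ (6 * k + 2) * ((π '' A).ncard * H.ncard) := by
          have := hA.isApproximateSubgroup.one_le
          gcongr
          exact hA.ncard_le_ncard_image_mul_ncard_ker_inter_sq π
      _ = (π '' A).ncard * (K ^ (6 * k + 2) * H.ncard) := by ring
  obtain ⟨F, hFB, hF, hcov, -⟩ := Set.ruzsa_covering_mul (((hA.1.pow k).inter_of_right _).pow 6)
    ((hA.1.pow 2).inter_of_right _) ⟨1, π.ker.one_mem, Set.one_mem_pow h1A⟩
    (by simpa [Nat.card_coe_set_eq] using hgrowth)
  refine ⟨F, hFB, by simpa [Nat.card_coe_set_eq] using hF, hcov.trans ?_⟩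
  rw [div_eq_mul_inv, hA.ker_inter_pow_inv π 2, sq B]
  exact Set.mul_subset_mul_left (Set.mul_subset_mul hHB hHB)

end IsApproxGroup

/-- **Projection lemma, kernel part.**  `(ker π ∩ Ã^k)³` is a `C`-approximate group of
cardinality comparable to `|Ã|/|π(Ã)|`. -/
theorem projection_lemma_kernel (K : ℝ) (hK : 1 ≤ K) (k : ℕ) (hk : 3 ≤ k) :
    ∃ c C : ℝ, 0 < c ∧ 0 < C ∧
      ∀ (G₁ G₂ : Type) [Group G₁] [Group G₂] (π : G₁ →* G₂), Function.Surjective π →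
        ∀ A : Set G₁, IsApproxGroup K A →
          IsApproxGroup C (((MonoidHom.ker π : Set G₁) ∩ A ^ k) ^ 3) ∧
          c * (A.ncard : ℝ) / ((π '' A).ncard : ℝ) ≤
            ((((MonoidHom.ker π : Set G₁) ∩ A ^ k) ^ 3).ncard : ℝ) ∧
          ((((MonoidHom.ker π : Set G₁) ∩ A ^ k) ^ 3).ncard : ℝ) ≤
            C * (A.ncard : ℝ) / ((π '' A).ncard : ℝ) := by
  refine ⟨1, 2 * K ^ (6 * k + 2), one_pos, by positivity, ?_⟩
  intro G₁ G₂ _ _ π _ A hA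
  have h1A := hA.isApproximateSubgroup.one_mem
  have hπA : (0 : ℝ) < (π '' A).ncard := mod_cast hA.ncard_image_pos π
  have hKk : K ^ (k * 3) ≤ 2 * K ^ (6 * k + 2) := by
    have : K ^ (k * 3) ≤ K ^ (6 * k + 2) := pow_le_pow_right₀ hK (by omega)
    linarith [pow_pos (zero_lt_one.trans_le hK) (6 * k + 2)]
  have hupper := hA.ncard_image_mul_ncard_ker_inter_pow_pow_le π k 3
  have hlower := hA.ncard_le_ncard_image_mul_ncard_ker_inter_pow_pow π (by omega : 2 ≤ k)
    (by norm_num : 3 ≠ 0)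
  obtain ⟨F, hFB, hF, hcov⟩ := hA.exists_cover_ker_inter_pow π (by omega : 2 ≤ k)
  refine ⟨(isApproxGroup_pow_three_of_cover ((hA.1.pow k).inter_of_right _)
    ⟨π.ker.one_mem, Set.one_mem_pow h1A⟩ (hA.ker_inter_pow_inv π k) hFB hcov).mono
    (by linarith), ?_, ?_⟩
  · rw [one_mul, div_le_iff₀ hπA]
    linarith
  · rw [le_div_iff₀ hπA, mul_comm]
    exact hupper.trans (mul_le_mul_of_nonneg_right hKk (Nat.cast_nonneg _))
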